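/- Let b be a prime, m ≥ 1, and let c_{i,j} ∈ {0,…,b−1} for 1 ≤ j ≤ i ≤ m with c_{i,i} ≢ 0 (mod b) for all i. Let P = {(n/b^m, μ(n)) : n = 0,1,…,b^m−1} be the associated NLT net. Then disp(P) ≤ (2b/b^m)(1 − b/(2b^m)); i.e., every axis-parallel box B ⊆ [0,1]² containing no point of P has area at most (2b/b^m)(1 − b/(2b^m)). -/
import Mathlib


/-- The set of areas of axis-parallel half-open boxes `[x1,y1) x [x2,y2)` inside `[0,1]^2`
containing no point of `P`. -/
def emptyBoxAreas (P : Set (ℝ × ℝ)) : Set ℝ :=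
  { A | ∃ x₁ y₁ x₂ y₂ : ℝ,
      0 ≤ x₁ ∧ x₁ ≤ y₁ ∧ y₁ ≤ 1 ∧ 0 ≤ x₂ ∧ x₂ ≤ y₂ ∧ y₂ ≤ 1 ∧
      (∀ p ∈ P, p ∉ Set.Ico x₁ y₁ ×ˢ Set.Ico x₂ y₂) ∧
      A = (y₁ - x₁) * (y₂ - x₂) }

/-- The dispersion of a point set `P ⊆ [0,1]^2`: the supremum of areas of empty
axis-parallel boxes. -/
noncomputable def disp (P : Set (ℝ × ℝ)) : ℝ := sSup (emptyBoxAreas P)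
/-- The `i`-th digit (1-based) of `n` in base `b`, with the convention that the
`0`-th digit is `0`. -/
def nthDigit (b n i : ℕ) : ℕ := if i = 0 then 0 else n / b ^ (i - 1) % b
/-- The second-coordinate map `μ` of an NLT net with coefficient matrix `c`:
`μ(n) = Σ_{i=1}^m ((c_{i,1}e₁ + ⋯ + c_{i,i}e_i) mod b)/b^i`. -/
noncomputable def nltMap (b m : ℕ) (c : ℕ → ℕ → ℕ) (n : ℕ) : ℝ :=
  ∑ i ∈ Finset.Icc 1 m,
    (((∑ j ∈ Finset.Icc 1 i, c i j * nthDigit b n j) % b : ℕ) : ℝ) / (b : ℝ) ^ i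

namespace NLTAux

variable (b : ℕ) (c : ℕ → ℕ → ℕ)

def vdig (n i : ℕ) : ℕ := (∑ j ∈ Finset.Icc 1 i, c i j * nthDigit b n j) % b

def V (d n : ℕ) : ℕ := ∑ i ∈ Finset.Icc 1 d, vdig b c n i * b ^ (d - i)

lemma nthDigit_lt (hb : 0 < b) (n i : ℕ) : nthDigit b n i < b := by
  unfold nthDigit; split
  · exact hb
  · exact Nat.mod_lt _ hb

lemma nthDigit_mod {d j : ℕ} (n : ℕ) (hj1 : 1 ≤ j) (hj : j ≤ d) :
    nthDigit b (n % b ^ d) j = nthDigit b n j := by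
  unfold nthDigit
  rw [if_neg (by omega), if_neg (by omega)]
  have hd : b ^ d = b ^ (j-1) * b ^ (d - j + 1) := by
    rw [← pow_add]; congr 1; omega
  rw [hd, Nat.mod_mul_right_div_self, Nat.mod_mod_of_dvd]
  exact dvd_pow_self b (by omega)

lemma vdig_lt (hb : 0 < b) (n i : ℕ) : vdig b c n i < b := Nat.mod_lt _ hb

lemma vdig_mod {d i : ℕ} (n : ℕ) (hi : i ≤ d) :
    vdig b c (n % b ^ d) i = vdig b c n i := by
  unfold vdig
  congr 1
  refine Finset.sum_congr rfl fun j hj => ?_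
  simp only [Finset.mem_Icc] at hj
  rw [nthDigit_mod b n hj.1 (le_trans hj.2 hi)]

lemma V_mod (d n : ℕ) : V b c d (n % b ^ d) = V b c d n := by
  unfold V
  refine Finset.sum_congr rfl fun i hi => ?_
  simp only [Finset.mem_Icc] at hi
  rw [vdig_mod b c n hi.2]

lemma V_succ (d n : ℕ) : V b c (d+1) n = b * V b c d n + vdig b c n (d+1) := by
  unfold V
  rw [Finset.sum_Icc_succ_top (by omega)]
  simp only [Nat.sub_self, pow_zero, mul_one]
  congr 1
  rw [Finset.mul_sum]
  refine Finset.sum_congr rfl fun i hi => ?_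
  simp only [Finset.mem_Icc] at hi
  have : d + 1 - i = (d - i) + 1 := by omega
  rw [this, pow_succ]; ring

lemma V_zero (n : ℕ) : V b c 0 n = 0 := by simp [V]

lemma V_lt (hb : 0 < b) (d n : ℕ) : V b c d n < b ^ d := by
  induction d with
  | zero => simp [V_zero]
  | succ d ih =>
    rw [V_succ]
    have h1 : vdig b c n (d+1) < b := vdig_lt b c hb n _
    have h2 : b * V b c d n ≤ b * (b ^ d - 1) := Nat.mul_le_mul_left _ (by omega)
    have h3 : b * (b ^ d - 1) = b ^ (d+1) - b := by
      rw [Nat.mul_sub, pow_succ, mul_one, mul_comm]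
    have hbd : b ≤ b ^ (d+1) := Nat.le_self_pow (by omega) b
    omega

lemma V_split (d e n : ℕ) (hb : 0 < b) :
    ∃ r, r < b ^ e ∧ V b c (d + e) n = V b c d n * b ^ e + r := by
  induction e with
  | zero => exact ⟨0, by simp⟩
  | succ e ih =>
    obtain ⟨r, hr, hV⟩ := ih
    refine ⟨b * r + vdig b c n (d + e + 1), ?_, ?_⟩
    · have : vdig b c n (d+e+1) < b := vdig_lt b c hb n _
      have h2 : b * r ≤ b * (b ^ e - 1) := Nat.mul_le_mul_left _ (by omega)
      have h3 : b * (b ^ e - 1) = b ^ (e+1) - b := by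
        rw [Nat.mul_sub, pow_succ, mul_one, mul_comm]
      have hbd : b ≤ b ^ (e+1) := Nat.le_self_pow (by omega) b
      omega
    · have : d + (e + 1) = (d + e) + 1 := by omega
      rw [this, V_succ, hV]
      ring

lemma mod_pow_succ_eq (hb : 0 < b) (d n : ℕ) :
    n % b ^ (d+1) = b ^ d * (n / b ^ d % b) + n % b ^ d := by
  have h1 : n % b ^ (d+1) / b ^ d = n / b ^ d % b := by
    rw [pow_succ]
    exact Nat.mod_mul_right_div_self n (b ^ d) b
  have h2 : n % b ^ (d+1) % b ^ d = n % b ^ d :=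
    Nat.mod_mod_of_dvd n (pow_dvd_pow b (by omega))
  conv_lhs => rw [← Nat.div_add_mod (n % b ^ (d+1)) (b ^ d)]
  rw [h1, h2]

lemma V_inj (hb : b.Prime) {m : ℕ} (hc : ∀ i j, c i j < b)
    (hdiag : ∀ i, 1 ≤ i → i ≤ m → c i i ≠ 0) :
    ∀ d, d ≤ m → ∀ n n', V b c d n = V b c d n' → n % b ^ d = n' % b ^ d := by
  have hb0 : 0 < b := hb.pos
  intro d
  induction d with
  | zero => intro _ n n' _; simp [Nat.mod_one]
  | succ d ih =>
    intro hdm n n' hV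
    rw [V_succ, V_succ] at hV
    have hv1 : vdig b c n (d+1) < b := vdig_lt b c hb0 n _
    have hv2 : vdig b c n' (d+1) < b := vdig_lt b c hb0 n' _
    have hVd : V b c d n = V b c d n' := by
      have := congrArg (· / b) hV
      simpa [Nat.mul_add_div hb0, Nat.div_eq_of_lt hv1, Nat.div_eq_of_lt hv2] using this
    have hvd : vdig b c n (d+1) = vdig b c n' (d+1) := by
      have := congrArg (· % b) hV
      simpa [Nat.mul_add_mod, Nat.mod_eq_of_lt hv1, Nat.mod_eq_of_lt hv2] using this
    have hmod : n % b ^ d = n' % b ^ d := ih (by omega) n n' hVd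
    -- digits 1..d equal
    have hdig : ∀ j, 1 ≤ j → j ≤ d → nthDigit b n j = nthDigit b n' j := by
      intro j h1 h2
      rw [← nthDigit_mod b n h1 h2, hmod, nthDigit_mod b n' h1 h2]
    -- top digit equal
    have htop : nthDigit b n (d+1) = nthDigit b n' (d+1) := by
      unfold vdig at hvd
      rw [Finset.sum_Icc_succ_top (by omega), Finset.sum_Icc_succ_top (by omega)] at hvd
      have hS : ∑ j ∈ Finset.Icc 1 d, c (d+1) j * nthDigit b n j
          = ∑ j ∈ Finset.Icc 1 d, c (d+1) j * nthDigit b n' j := by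
        refine Finset.sum_congr rfl fun j hj => ?_
        simp only [Finset.mem_Icc] at hj
        rw [hdig j hj.1 hj.2]
      rw [hS] at hvd
      have hme : c (d+1) (d+1) * nthDigit b n (d+1) ≡ c (d+1) (d+1) * nthDigit b n' (d+1) [MOD b] :=
        Nat.ModEq.add_left_cancel' _ hvd
      have hcop : b.gcd (c (d+1) (d+1)) = 1 := by
        have hne : c (d+1) (d+1) ≠ 0 := hdiag (d+1) (by omega) hdm
        have hlt : c (d+1) (d+1) < b := hc (d+1) (d+1)
        have hnd : ¬ b ∣ c (d+1) (d+1) := fun hdvd => by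
          have := Nat.le_of_dvd (Nat.pos_of_ne_zero hne) hdvd; omega
        exact (Nat.Prime.coprime_iff_not_dvd hb).mpr hnd
      have := Nat.ModEq.cancel_left_of_coprime hcop hme
      have h1 : nthDigit b n (d+1) < b := nthDigit_lt b hb0 n _
      have h2 : nthDigit b n' (d+1) < b := nthDigit_lt b hb0 n' _
      rwa [Nat.ModEq, Nat.mod_eq_of_lt h1, Nat.mod_eq_of_lt h2] at this
    rw [mod_pow_succ_eq b hb0, mod_pow_succ_eq b hb0, hmod]
    have hdd : nthDigit b n (d+1) = n / b ^ d % b := by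
      unfold nthDigit; rw [if_neg (by omega)]; norm_num
    have hdd' : nthDigit b n' (d+1) = n' / b ^ d % b := by
      unfold nthDigit; rw [if_neg (by omega)]; norm_num
    rw [← hdd, ← hdd', htop]


lemma nltMap_eq (hb : 0 < b) (m n : ℕ) :
    nltMap b m c n = (V b c m n : ℝ) / (b:ℝ) ^ m := by
  unfold nltMap V vdig
  rw [Nat.cast_sum, Finset.sum_div]
  refine Finset.sum_congr rfl fun i hi => ?_
  simp only [Finset.mem_Icc] at hi
  have hsplit : (b:ℝ) ^ m = (b:ℝ) ^ i * (b:ℝ) ^ (m - i) := by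
    rw [← pow_add]; congr 1; omega
  have hne : ((b:ℝ)) ^ (m - i) ≠ 0 := by
    have : (0:ℝ) < (b:ℝ) := by exact_mod_cast hb
    positivity
  rw [Nat.cast_mul, Nat.cast_pow, hsplit, mul_div_mul_right _ _ hne]

lemma arith (K M N : ℕ) (hb : 2 ≤ b) (hM1 : 1 ≤ M) (hM2 : M + 2 ≤ 2*b)
    (hMK : M ≤ K) (hKN : K ≤ N) (hbN : b*b ≤ N) :
    (M+2)*(K-M+1)*N + b*b*K ≤ 2*b*K*N := by
  obtain ⟨A, rfl⟩ := Nat.exists_eq_add_of_le hMK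
  have h1 : M + A - M + 1 = A + 1 := by omega
  rw [h1]
  rcases Nat.lt_or_ge (M+2) (2*b) with h | h
  · have key : (M+2)*(A+1) + (M + A) ≤ 2*b*(M+A) := by nlinarith
    calc (M+2)*(A+1)*N + b*b*(M+A) ≤ (M+2)*(A+1)*N + N*(M+A) := by
          have := Nat.mul_le_mul_right (M+A) hbN; nlinarith
      _ ≤ 2*b*(M+A)*N := by nlinarith
  · obtain ⟨t, ht⟩ : ∃ t, 2*b = t + 3 := ⟨2*b - 3, by omega⟩
    have hM : M = t + 1 := by omega
    have hbt : b ≤ 2*t := by omega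
    subst hM
    have h2 : b*(t+1+A) ≤ b*N := Nat.mul_le_mul_left _ hKN
    have e1 : b*b*(t+1+A) ≤ 2*t*(b*N) := by
      calc b*b*(t+1+A) = b*(b*(t+1+A)) := by ring
        _ ≤ (2*t)*(b*N) := Nat.mul_le_mul hbt h2
    have e2 : 2*t*(b*N) = t*(t+3)*N := by
      have h3 : 2*t*(b*N) = t*((2*b)*N) := by ring
      rw [h3, ht]; ring
    have e4 : b*b*(t+1+A) ≤ t*(t+3)*N := e2 ▸ e1
    nlinarith [e4]

end NLTAux

open NLTAux in
set_option maxHeartbeats 2000000 in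
lemma key_box (b m : ℕ) (hb : Nat.Prime b) (hm : 2 ≤ m) (c : ℕ → ℕ → ℕ)
    (hc : ∀ i j, c i j < b) (hdiag : ∀ i, 1 ≤ i → i ≤ m → c i i ≠ 0)
    (x₁ y₁ x₂ y₂ : ℝ) (hx₁ : 0 ≤ x₁) (hxy₁ : x₁ ≤ y₁) (hy₁ : y₁ ≤ 1)
    (hx₂ : 0 ≤ x₂) (hxy₂ : x₂ ≤ y₂) (hy₂ : y₂ ≤ 1)
    (hemp : ∀ n, n < b ^ m → ¬ (x₁ ≤ (n:ℝ)/(b:ℝ)^m ∧ (n:ℝ)/(b:ℝ)^m < y₁ ∧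
        x₂ ≤ nltMap b m c n ∧ nltMap b m c n < y₂)) :
    (y₁ - x₁) * (y₂ - x₂) ≤
      2 * (b:ℝ) / (b:ℝ)^m * (1 - (b:ℝ) / (2 * (b:ℝ)^m)) := by
  have hb0 : 0 < b := hb.pos
  have hb2 : 2 ≤ b := hb.two_le
  have hB0 : (0:ℝ) < (b:ℝ) := by exact_mod_cast hb0
  have hB2 : (2:ℝ) ≤ (b:ℝ) := by exact_mod_cast hb2
  have hNR : (0:ℝ) < (b:ℝ)^m := by positivity
  have hNRcast : ((b^m : ℕ) : ℝ) = (b:ℝ)^m := by push_cast; ring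
  have hbbN : b*b ≤ b^m := by
    calc b*b = b^2 := by ring
      _ ≤ b^m := Nat.pow_le_pow_right hb0 hm
  have hbbNR : (b:ℝ)*(b:ℝ) ≤ (b:ℝ)^m := by exact_mod_cast hbbN
  have hT : 2 * (b:ℝ) / (b:ℝ)^m * (1 - (b:ℝ) / (2 * (b:ℝ)^m))
      = (2*(b:ℝ)*(b:ℝ)^m - (b:ℝ)*(b:ℝ)) / ((b:ℝ)^m * (b:ℝ)^m) := by
    field_simp
  rw [hT]
  have hw1 : y₁ - x₁ ≤ 1 := by linarith
  have hh0 : 0 ≤ y₂ - x₂ := by linarith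
  have hw0 : 0 ≤ y₁ - x₁ := by linarith
  by_cases hQm : ⌈x₂*(b:ℝ)^m⌉₊ < ⌊y₂*(b:ℝ)^m⌋₊
  case neg =>
    have f1 : y₂ * (b:ℝ)^m < (⌊y₂*(b:ℝ)^m⌋₊:ℝ) + 1 := Nat.lt_floor_add_one _
    have f2 : (⌈x₂*(b:ℝ)^m⌉₊:ℝ) < x₂*(b:ℝ)^m + 1 := Nat.ceil_lt_add_one (by positivity)
    have f3 : (⌊y₂*(b:ℝ)^m⌋₊:ℝ) ≤ (⌈x₂*(b:ℝ)^m⌉₊:ℝ) := by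
      exact_mod_cast Nat.not_lt.mp hQm
    have hh2 : (y₂ - x₂) * (b:ℝ)^m ≤ 2 := by nlinarith
    have hwh : (y₁ - x₁) * (y₂ - x₂) ≤ y₂ - x₂ := by nlinarith
    rw [le_div_iff₀ (by positivity)]
    have h5 : 0 ≤ ((b:ℝ) - 2) * (b:ℝ)^m := mul_nonneg (by linarith) hNR.le
    have hfin : 2 * (b:ℝ)^m ≤ 2*(b:ℝ)*(b:ℝ)^m - (b:ℝ)*(b:ℝ) := by nlinarith [h5]
    calc (y₁-x₁)*(y₂-x₂) * ((b:ℝ)^m * (b:ℝ)^m)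
        ≤ (y₂-x₂) * ((b:ℝ)^m * (b:ℝ)^m) :=
          mul_le_mul_of_nonneg_right hwh (by positivity)
      _ = ((y₂-x₂) * (b:ℝ)^m) * (b:ℝ)^m := by ring
      _ ≤ 2 * (b:ℝ)^m := mul_le_mul_of_nonneg_right hh2 hNR.le
      _ ≤ 2*(b:ℝ)*(b:ℝ)^m - (b:ℝ)*(b:ℝ) := hfin
  case pos =>
    have hex : ∃ d, ⌈x₂*(b:ℝ)^d⌉₊ < ⌊y₂*(b:ℝ)^d⌋₊ := ⟨m, hQm⟩
    set d2 := Nat.find hex with hd2def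
    have hd2 : ⌈x₂*(b:ℝ)^d2⌉₊ < ⌊y₂*(b:ℝ)^d2⌋₊ := Nat.find_spec hex
    have hd2m : d2 ≤ m := Nat.find_le hQm
    have hK0 : 0 < b ^ d2 := pow_pos hb0 d2
    have hKR : (0:ℝ) < (b:ℝ)^d2 := by positivity
    have hKcast : ((b^d2 : ℕ) : ℝ) = (b:ℝ)^d2 := by push_cast; ring
    set c0 := ⌈x₂*(b:ℝ)^d2⌉₊ with hc0def
    set f0 := ⌊y₂*(b:ℝ)^d2⌋₊ with hf0def
    have hc0 : x₂*(b:ℝ)^d2 ≤ (c0:ℝ) := Nat.le_ceil _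
    have hf0 : (f0:ℝ) ≤ y₂*(b:ℝ)^d2 := Nat.floor_le (mul_nonneg (by linarith) hKR.le)
    have hf0K : f0 ≤ b ^ d2 := by
      have h1 : y₂*(b:ℝ)^d2 ≤ ((b^d2 : ℕ):ℝ) := by rw [hKcast]; nlinarith
      calc f0 ≤ ⌊((b^d2:ℕ):ℝ)⌋₊ := Nat.floor_mono h1
        _ = b^d2 := Nat.floor_natCast _
    set M := f0 - c0 with hMdef
    have hM1 : 1 ≤ M := by omega
    have hMK : M ≤ b ^ d2 := by omega
    have hf0c0 : f0 = c0 + M := by omega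
    -- M + 2 ≤ 2b
    have hM2b : M + 2 ≤ 2*b := by
      by_contra hcon
      push_neg at hcon
      have hd2pos : 0 < d2 := by
        rcases Nat.eq_zero_or_pos d2 with h0 | h
        · exfalso
          have hK1 : b ^ d2 = 1 := by rw [h0, pow_zero]
          omega
        · exact h
      set k := (c0 + b - 1) / b with hkdef
      have hkb1 : c0 ≤ k*b := by
        have h1 := Nat.div_add_mod (c0 + b - 1) b
        have h2 := Nat.mod_lt (c0 + b - 1) hb0
        rw [← hkdef] at h1
        have h3 : b * k = k * b := Nat.mul_comm b k
        rw [h3] at h1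
        generalize k*b = X at h1 ⊢
        omega
      have hkb2 : k*b + b ≤ f0 := by
        have := Nat.div_mul_le_self (c0 + b - 1) b
        rw [← hkdef] at this
        generalize k*b = X at this ⊢
        omega
      have hBsplit : (b:ℝ)^d2 = (b:ℝ)^(d2-1) * (b:ℝ) := by
        rw [← pow_succ]; congr 1; omega
      have hKR' : (0:ℝ) < (b:ℝ)^(d2-1) := by positivity
      have hx2k : x₂*(b:ℝ)^(d2-1) ≤ (k:ℝ) := by
        have h1 : x₂*(b:ℝ)^d2 ≤ ((k*b:ℕ):ℝ) := by
          refine le_trans hc0 ?_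
          exact_mod_cast Nat.cast_le.mpr hkb1
        push_cast at h1
        rw [hBsplit] at h1
        nlinarith
      have hy2k : ((k:ℝ)+1) ≤ y₂*(b:ℝ)^(d2-1) := by
        have h1 : ((k*b+b:ℕ):ℝ) ≤ (f0:ℝ) := by exact_mod_cast hkb2
        push_cast at h1
        have h2 : (f0:ℝ) ≤ y₂*((b:ℝ)^(d2-1)*(b:ℝ)) := by
          rw [← hBsplit]; exact hf0
        nlinarith
      have hfound : ⌈x₂*(b:ℝ)^(d2-1)⌉₊ < ⌊y₂*(b:ℝ)^(d2-1)⌋₊ := by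
        have e1 : ⌈x₂*(b:ℝ)^(d2-1)⌉₊ ≤ k := Nat.ceil_le.mpr hx2k
        have e2 : k+1 ≤ ⌊y₂*(b:ℝ)^(d2-1)⌋₊ := Nat.le_floor (by exact_mod_cast hy2k)
        omega
      exact absurd hfound (Nat.find_min hex (by omega))
    -- width bound via pigeonhole
    have hw : y₁ - x₁ ≤ ((b^d2 - M + 1 : ℕ):ℝ) / (b:ℝ)^m := by
      by_contra hcon
      push_neg at hcon
      set a := ⌈x₁*(b:ℝ)^m⌉₊ with hadef
      have haup : (a:ℝ) < x₁*(b:ℝ)^m + 1 := Nat.ceil_lt_add_one (mul_nonneg hx₁ hNR.le)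
      have halow : x₁*(b:ℝ)^m ≤ (a:ℝ) := Nat.le_ceil _
      have hKM : ((b^d2 - M + 1 : ℕ):ℝ) = ((b^d2:ℕ):ℝ) - (M:ℝ) + 1 := by
        push_cast [Nat.cast_sub hMK]
        ring
      have hcon' : ((b^d2:ℕ):ℝ) - (M:ℝ) + 1 < (y₁ - x₁) * (b:ℝ)^m := by
        rw [hKM] at hcon
        exact (div_lt_iff₀ hNR).mp hcon
      have hwin : ∀ n ∈ Finset.Icc a (a + (b^d2 - M)),
          n < b^m ∧ x₁ ≤ (n:ℝ)/(b:ℝ)^m ∧ (n:ℝ)/(b:ℝ)^m < y₁ := by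
        intro n hn
        simp only [Finset.mem_Icc] at hn
        have hnle : (n:ℝ) ≤ (a:ℝ) + (((b^d2:ℕ):ℝ) - M) := by
          have h1 : (n:ℕ) ≤ a + (b^d2 - M) := hn.2
          have h2 := (Nat.cast_le (α := ℝ)).mpr h1
          push_cast [Nat.cast_sub hMK] at h2
          linarith
        have hlt : (n:ℝ) < y₁ * (b:ℝ)^m := by nlinarith
        have hnN : n < b^m := by
          have h3 : (n:ℝ) < ((b^m : ℕ):ℝ) := by
            rw [hNRcast]; nlinarith
          exact_mod_cast h3
        refine ⟨hnN, ?_, ?_⟩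
        · rw [le_div_iff₀ hNR]
          have h4 : (a:ℝ) ≤ (n:ℝ) := by exact_mod_cast hn.1
          linarith
        · rw [div_lt_iff₀ hNR]; exact hlt
      have hVout : ∀ n ∈ Finset.Icc a (a + (b^d2 - M)),
          ¬ (c0 ≤ V b c d2 n ∧ V b c d2 n < f0) := by
        rintro n hn ⟨h1, h2⟩
        obtain ⟨hnN, hx, hy⟩ := hwin n hn
        refine hemp n hnN ⟨hx, hy, ?_, ?_⟩
        · rw [nltMap_eq b c hb0 m n]
          obtain ⟨r, hr, hVm⟩ := V_split b c d2 (m - d2) n hb0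
          rw [show d2 + (m - d2) = m by omega] at hVm
          rw [hVm]
          have hKd : (b:ℝ)^m = (b:ℝ)^d2 * (b:ℝ)^(m-d2) := by
            rw [← pow_add]; congr 1; omega
          have hx2V : x₂ * (b:ℝ)^d2 ≤ (V b c d2 n : ℝ) := by
            calc x₂*(b:ℝ)^d2 ≤ (c0:ℝ) := hc0
              _ ≤ _ := by exact_mod_cast h1
          rw [le_div_iff₀ hNR]
          have hr0 : (0:ℝ) ≤ ((r:ℕ):ℝ) := by positivity
          have hmd : (0:ℝ) < (b:ℝ)^(m-d2) := by positivity
          push_cast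
          calc x₂ * (b:ℝ)^m = (x₂ * (b:ℝ)^d2) * (b:ℝ)^(m-d2) := by rw [hKd]; ring
            _ ≤ (V b c d2 n : ℝ) * (b:ℝ)^(m-d2) :=
                mul_le_mul_of_nonneg_right hx2V hmd.le
            _ ≤ (V b c d2 n : ℝ) * (b:ℝ)^(m-d2) + (r:ℝ) := by linarith
        · rw [nltMap_eq b c hb0 m n]
          obtain ⟨r, hr, hVm⟩ := V_split b c d2 (m - d2) n hb0
          rw [show d2 + (m - d2) = m by omega] at hVm
          rw [hVm]
          have hKd : (b:ℝ)^m = (b:ℝ)^d2 * (b:ℝ)^(m-d2) := by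
            rw [← pow_add]; congr 1; omega
          have hmd : (0:ℝ) < (b:ℝ)^(m-d2) := by positivity
          rw [div_lt_iff₀ hNR]
          have hrR : ((r:ℕ):ℝ) < (b:ℝ)^(m-d2) := by
            have := (Nat.cast_lt (α := ℝ)).mpr hr
            push_cast at this
            exact this
          have hV1f : (V b c d2 n : ℝ) + 1 ≤ (f0:ℝ) := by
            exact_mod_cast Nat.succ_le_of_lt h2
          have hf0y : (f0:ℝ) ≤ y₂*(b:ℝ)^d2 := hf0
          push_cast
          calc (V b c d2 n : ℝ) * (b:ℝ)^(m-d2) + (r:ℝ)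
              < ((V b c d2 n : ℝ) + 1) * (b:ℝ)^(m-d2) := by nlinarith
            _ ≤ (f0:ℝ) * (b:ℝ)^(m-d2) := mul_le_mul_of_nonneg_right hV1f hmd.le
            _ ≤ (y₂*(b:ℝ)^d2) * (b:ℝ)^(m-d2) := mul_le_mul_of_nonneg_right hf0y hmd.le
            _ = y₂ * (b:ℝ)^m := by rw [hKd]; ring
      -- counting contradiction
      set S := Finset.Icc a (a + (b^d2 - M)) with hSdef
      have hcardS : S.card = b^d2 - M + 1 := by
        rw [hSdef, Nat.card_Icc]; omega
      have hinj : Set.InjOn (fun n => V b c d2 (n % b^d2)) S := by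
        intro n hn n' hn' hgg
        simp only at hgg
        have h1 : (n % b^d2) % b ^ d2 = (n' % b^d2) % b ^ d2 :=
          V_inj b c hb hc hdiag d2 hd2m _ _ hgg
        rw [Nat.mod_mod_of_dvd _ dvd_rfl, Nat.mod_mod_of_dvd _ dvd_rfl] at h1
        simp only [hSdef, Finset.coe_Icc, Set.mem_Icc] at hn hn'
        have hdvd : ((b^d2 : ℕ):ℤ) ∣ (n':ℤ) - (n:ℤ) := Nat.ModEq.dvd h1
        have habs : |(n':ℤ) - (n:ℤ)| < ((b^d2:ℕ):ℤ) := by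
          rw [abs_lt]
          constructor <;> omega
        have h0 : (n':ℤ) - (n:ℤ) = 0 := Int.eq_zero_of_abs_lt_dvd hdvd habs
        omega
      have himg : S.image (fun n => V b c d2 (n % b^d2)) ⊆
          Finset.range (b^d2) \ Finset.Ico c0 f0 := by
        intro v hv
        simp only [Finset.mem_image] at hv
        obtain ⟨n, hn, rfl⟩ := hv
        simp only [Finset.mem_sdiff, Finset.mem_range, Finset.mem_Ico]
        refine ⟨V_lt b c hb0 d2 _, ?_⟩
        rw [V_mod b c d2 n]
        exact fun hcf => hVout n hn hcf
      have hcard1 : (S.image (fun n => V b c d2 (n % b^d2))).card = b^d2 - M + 1 := by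
        rw [Finset.card_image_of_injOn hinj, hcardS]
      have hsub : Finset.Ico c0 f0 ⊆ Finset.range (b^d2) := by
        intro v hv
        simp only [Finset.mem_Ico] at hv
        simp only [Finset.mem_range]
        omega
      have hcard2 : (Finset.range (b^d2) \ Finset.Ico c0 f0).card = b^d2 - M := by
        rw [Finset.card_sdiff_of_subset hsub, Finset.card_range, Nat.card_Ico]
      have hle := Finset.card_le_card himg
      rw [hcard1, hcard2] at hle
      omega
    -- height bound
    have hh : (y₂ - x₂) * (b:ℝ)^d2 ≤ (M:ℝ) + 2 := by
      have f1 : y₂ * (b:ℝ)^d2 < (f0:ℝ) + 1 := Nat.lt_floor_add_one _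
      have f2 : (c0:ℝ) < x₂*(b:ℝ)^d2 + 1 := Nat.ceil_lt_add_one (mul_nonneg hx₂ hKR.le)
      have f3 : (f0:ℝ) = (c0:ℝ) + (M:ℝ) := by exact_mod_cast hf0c0
      nlinarith
    -- combine
    have harith := arith b (b^d2) M (b^m) hb2 hM1 hM2b hMK
      (Nat.pow_le_pow_right hb0 hd2m) hbbN
    have harithR : ((M:ℝ)+2) * ((b^d2 - M + 1 : ℕ):ℝ) * ((b^m:ℕ):ℝ) + (b:ℝ)*(b:ℝ)*((b^d2:ℕ):ℝ)
        ≤ 2*(b:ℝ)*((b^d2:ℕ):ℝ)*((b^m:ℕ):ℝ) := by exact_mod_cast harith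
    have hhdiv : y₂ - x₂ ≤ ((M:ℝ)+2)/(b:ℝ)^d2 := (le_div_iff₀ hKR).mpr hh
    have hwnn : (0:ℝ) ≤ ((b^d2 - M + 1 : ℕ):ℝ) / (b:ℝ)^m := by positivity
    have hprod : (y₁-x₁)*(y₂-x₂) ≤
        (((b^d2 - M + 1:ℕ)):ℝ)/(b:ℝ)^m * (((M:ℝ)+2)/(b:ℝ)^d2) := by
      apply mul_le_mul hw hhdiv hh0 hwnn
    refine le_trans hprod ?_
    rw [div_mul_div_comm, div_le_div_iff₀ (by positivity) (by positivity)]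
    rw [← hKcast, ← hNRcast]
    nlinarith [mul_le_mul_of_nonneg_right harithR (le_of_lt (hNRcast ▸ hNR)), hKR, hNR,
      mul_pos (mul_pos hKR hNR) hNR]
  
/-- Upper bound for the dispersion of NLT nets: every axis-parallel box
`[x₁,y₁) × [x₂,y₂) ⊆ [0,1]²` containing no point of the NLT net has area at most
`(2b/b^m)(1 − b/(2b^m))`. -/
theorem disp_NLT_le (b m : ℕ) (hb : Nat.Prime b) (hm : 1 ≤ m) (c : ℕ → ℕ → ℕ)
    (hc : ∀ i j, c i j < b) (hdiag : ∀ i, 1 ≤ i → i ≤ m → c i i ≠ 0)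
    (P : Set (ℝ × ℝ))
    (hP : P = {p : ℝ × ℝ | ∃ n < b ^ m, p = ((n : ℝ) / (b : ℝ) ^ m, nltMap b m c n)}) :
    (∀ x₁ y₁ x₂ y₂ : ℝ, 0 ≤ x₁ → x₁ ≤ y₁ → y₁ ≤ 1 → 0 ≤ x₂ → x₂ ≤ y₂ → y₂ ≤ 1 →
      (∀ p ∈ P, p ∉ Set.Ico x₁ y₁ ×ˢ Set.Ico x₂ y₂) →
      (y₁ - x₁) * (y₂ - x₂) ≤ 2 * (b : ℝ) / (b : ℝ) ^ m * (1 - (b : ℝ) / (2 * (b : ℝ) ^ m))) ∧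
    disp P ≤ 2 * (b : ℝ) / (b : ℝ) ^ m * (1 - (b : ℝ) / (2 * (b : ℝ) ^ m)) := by
  have hb0 : 0 < b := hb.pos
  have hB0 : (0:ℝ) < (b:ℝ) := by exact_mod_cast hb0
  have hNR : (0:ℝ) < (b:ℝ)^m := by positivity
  have hbox : ∀ x₁ y₁ x₂ y₂ : ℝ, 0 ≤ x₁ → x₁ ≤ y₁ → y₁ ≤ 1 → 0 ≤ x₂ → x₂ ≤ y₂ → y₂ ≤ 1 →
      (∀ p ∈ P, p ∉ Set.Ico x₁ y₁ ×ˢ Set.Ico x₂ y₂) →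
      (y₁ - x₁) * (y₂ - x₂) ≤ 2 * (b : ℝ) / (b : ℝ) ^ m * (1 - (b : ℝ) / (2 * (b : ℝ) ^ m)) := by
    intro x₁ y₁ x₂ y₂ hx₁ hxy₁ hy₁ hx₂ hxy₂ hy₂ hP'
    rcases Nat.lt_or_ge m 2 with hm1 | hm2
    · -- m = 1 : the bound equals 1
      have hmeq : m = 1 := by omega
      subst hmeq
      have hTeq : 2 * (b:ℝ) / (b:ℝ)^1 * (1 - (b:ℝ) / (2 * (b:ℝ)^1)) = 1 := by
        field_simp
        ring
      rw [hTeq]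
      have h1 : y₁ - x₁ ≤ 1 := by linarith
      have h2 : y₂ - x₂ ≤ 1 := by linarith
      nlinarith
    · refine key_box b m hb hm2 c hc hdiag x₁ y₁ x₂ y₂ hx₁ hxy₁ hy₁ hx₂ hxy₂ hy₂ ?_
      intro n hn hcontra
      have hmem : ((n:ℝ)/(b:ℝ)^m, nltMap b m c n) ∈ P := by
        rw [hP]; exact ⟨n, hn, rfl⟩
      refine hP' _ hmem ?_
      simp only [Set.mem_prod, Set.mem_Ico]
      exact ⟨⟨hcontra.1, hcontra.2.1⟩, hcontra.2.2.1, hcontra.2.2.2⟩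
  refine ⟨hbox, ?_⟩
  apply Real.sSup_le
  · rintro A ⟨x₁, y₁, x₂, y₂, hx₁, hxy₁, hy₁, hx₂, hxy₂, hy₂, hP', rfl⟩
    exact hbox x₁ y₁ x₂ y₂ hx₁ hxy₁ hy₁ hx₂ hxy₂ hy₂ hP'
  · have hble : (b:ℝ) ≤ 2 * (b:ℝ)^m := by
      have : (b:ℝ) ≤ (b:ℝ)^m := by
        calc (b:ℝ) = (b:ℝ)^1 := (pow_one _).symm
          _ ≤ (b:ℝ)^m := pow_le_pow_right₀ (by exact_mod_cast hb0) hm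
      linarith
    have h1 : 0 ≤ 1 - (b:ℝ) / (2 * (b:ℝ)^m) := by
      rw [sub_nonneg, div_le_one (by positivity)]
      exact hble
    positivity
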